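/- arXiv:2104.01545 — 2 statements merged into one kernel-verified Lean document; each statement's English description precedes it below -/
import Mathlib

section
/- (Concavity-preservation of the belief-MDP Bellman backup; key step for Theorem 2.) In the filter setup, let J : Δ^N → ℝ be concave. Then for every u ∈ 𝒰 the function π ↦ Σ_{y ∈ 𝒴, σ(π,u,y) > 0} σ(π,u,y) · J( Π(π,u,y) ) is concave on Δ^N. -/
/-!
Writing `σ · J(𝐓 / σ)` as the perspective `(t, x) ↦ t · J(t⁻¹ • x)` of `J` evaluated at the
pair `(σ, 𝐓)`, which depends linearly on `π`, reduces the theorem to the concavity of the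
perspective. On the cone over the domain of `J` the perspective is positively homogeneous and,
by concavity of `J`, superadditive; together these give concavity. The filter maps the simplex
into this cone because `𝐓 ≥ 0`, so that `σ = 0` forces `𝐓 = 0`.
-/

open Finset

/-- The probability simplex `Δ^N` in `ℝ^N`. -/
def stdSimplex' (N : ℕ) : Set (Fin N → ℝ) :=
  {π | (∀ i, 0 ≤ π i) ∧ ∑ i, π i = 1}

/-- Unnormalised Bayesian filter update `𝐓(π,u,y)_i = B(y|i,u) Σ_j A_{ij}(u) π_j`. -/
noncomputable def Tvec {N : ℕ} {U Y : Type*} [Fintype Y]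
    (A : U → Fin N → Fin N → ℝ) (B : Y → Fin N → U → ℝ)
    (π : Fin N → ℝ) (u : U) (y : Y) : Fin N → ℝ :=
  fun i => B y i u * ∑ j, A u i j * π j

/-- The normaliser `σ(π,u,y) = Σ_i 𝐓(π,u,y)_i`. -/
noncomputable def sigNorm {N : ℕ} {U Y : Type*} [Fintype Y]
    (A : U → Fin N → Fin N → ℝ) (B : Y → Fin N → U → ℝ)
    (π : Fin N → ℝ) (u : U) (y : Y) : ℝ :=
  ∑ i, Tvec A B π u y i

/-- The belief update `Π(π,u,y) = 𝐓(π,u,y) / σ(π,u,y)`. -/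
noncomputable def belUpd {N : ℕ} {U Y : Type*} [Fintype Y]
    (A : U → Fin N → Fin N → ℝ) (B : Y → Fin N → U → ℝ)
    (π : Fin N → ℝ) (u : U) (y : Y) : Fin N → ℝ :=
  fun i => Tvec A B π u y i / sigNorm A B π u y

open scoped Classical in
/-- The Bellman-backup expectation `Σ_{y : σ(π,u,y) > 0} σ(π,u,y) · J(Π(π,u,y))`. -/
noncomputable def backup {N : ℕ} {U Y : Type*} [Fintype Y]
    (A : U → Fin N → Fin N → ℝ) (B : Y → Fin N → U → ℝ)
    (J : (Fin N → ℝ) → ℝ) (π : Fin N → ℝ) (u : U) : ℝ :=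
  ∑ y : Y, if 0 < sigNorm A B π u y then sigNorm A B π u y * J (belUpd A B π u y) else 0

theorem ConcaveOn.finset_sum {𝕜 E β ι : Type*} [Semiring 𝕜] [PartialOrder 𝕜]
    [AddCommMonoid E] [AddCommMonoid β] [PartialOrder β] [IsOrderedAddMonoid β]
    [Module 𝕜 E] [Module 𝕜 β] {s : Set E} {f : ι → E → β} {t : Finset ι}
    (hs : Convex 𝕜 s) (hf : ∀ i ∈ t, ConcaveOn 𝕜 s (f i)) :
    ConcaveOn 𝕜 s fun x => ∑ i ∈ t, f i x := by
  induction t using Finset.cons_induction with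
  | empty => simpa using concaveOn_const (0 : β) hs
  | cons a t _ ih =>
    simp_rw [Finset.sum_cons]
    exact (hf a (mem_cons_self a t)).add (ih fun i hi => hf i (mem_cons_of_mem hi))

section Perspective

variable {𝕜 E : Type*} [Field 𝕜] [AddCommGroup E] [Module 𝕜 E]

lemma inv_mul_smul_smul {c : 𝕜} (hc : c ≠ 0) (t : 𝕜) (x : E) :
    (c * t)⁻¹ • c • x = t⁻¹ • x := by
  rw [smul_smul, mul_inv, mul_right_comm, inv_mul_cancel₀ hc, one_mul]

lemma div_add_div_self_add_eq_one {t₁ t₂ : 𝕜} (h : t₁ + t₂ ≠ 0) :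
    t₁ / (t₁ + t₂) + t₂ / (t₁ + t₂) = 1 := by
  rw [← add_div, div_self h]

variable [LinearOrder 𝕜] [IsStrictOrderedRing 𝕜] {s : Set E} {J : E → 𝕜} {p q : 𝕜 × E}

/-- The perspective of `J`, extended by `0` off the half-space `0 < t`. -/
def perspective (J : E → 𝕜) (p : 𝕜 × E) : 𝕜 :=
  if 0 < p.1 then p.1 * J (p.1⁻¹ • p.2) else 0

def perspectiveCone (s : Set E) : Set (𝕜 × E) :=
  {p | p = 0 ∨ 0 < p.1 ∧ p.1⁻¹ • p.2 ∈ s}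

lemma inv_add_smul_add {t₁ t₂ : 𝕜} (h₁ : 0 < t₁) (h₂ : 0 < t₂) (x₁ x₂ : E) :
    (t₁ + t₂)⁻¹ • (x₁ + x₂) = (t₁ / (t₁ + t₂)) • t₁⁻¹ • x₁ + (t₂ / (t₁ + t₂)) • t₂⁻¹ • x₂ := by
  rw [smul_smul, smul_smul, smul_add]
  congr 2 <;> field_simp

lemma perspective_smul (J : E → 𝕜) {c : 𝕜} (hc : 0 ≤ c) (p : 𝕜 × E) :
    perspective J (c • p) = c * perspective J p := by
  rcases hc.eq_or_lt with rfl | hc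
  · simp [perspective]
  · simp only [perspective, Prod.smul_fst, Prod.smul_snd, smul_eq_mul,
      mul_pos_iff_of_pos_left hc, inv_mul_smul_smul hc.ne']
    split_ifs <;> ring

lemma smul_mem_perspectiveCone {c : 𝕜} (hc : 0 ≤ c) (hp : p ∈ perspectiveCone s) :
    c • p ∈ perspectiveCone s := by
  rcases hc.eq_or_lt with rfl | hc
  · exact .inl (zero_smul 𝕜 p)
  rcases hp with rfl | ⟨ht, hx⟩
  · exact .inl (smul_zero c)
  · refine .inr ⟨mul_pos hc ht, ?_⟩
    rwa [Prod.smul_fst, Prod.smul_snd, smul_eq_mul, inv_mul_smul_smul hc.ne']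

lemma add_mem_perspectiveCone (hs : Convex 𝕜 s) (hp : p ∈ perspectiveCone s)
    (hq : q ∈ perspectiveCone s) : p + q ∈ perspectiveCone s := by
  rcases hp with rfl | ⟨h₁, hx₁⟩
  · rwa [zero_add]
  rcases hq with rfl | ⟨h₂, hx₂⟩
  · exact (add_zero p).symm ▸ .inr ⟨h₁, hx₁⟩
  refine .inr ⟨add_pos h₁ h₂, ?_⟩
  rw [Prod.fst_add, Prod.snd_add, inv_add_smul_add h₁ h₂]
  exact hs hx₁ hx₂ (by positivity) (by positivity) (div_add_div_self_add_eq_one (add_pos h₁ h₂).ne')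

lemma perspective_add_perspective_le (hJ : ConcaveOn 𝕜 s J) (hp : p ∈ perspectiveCone s)
    (hq : q ∈ perspectiveCone s) : perspective J p + perspective J q ≤ perspective J (p + q) := by
  rcases hp with rfl | ⟨h₁, hx₁⟩
  · simp [perspective]
  rcases hq with rfl | ⟨h₂, hx₂⟩
  · simp [perspective]
  obtain ⟨t₁, x₁⟩ := p
  obtain ⟨t₂, x₂⟩ := q
  have ht : 0 < t₁ + t₂ := add_pos h₁ h₂
  have hJmix := hJ.2 hx₁ hx₂ (div_nonneg h₁.le ht.le) (div_nonneg h₂.le ht.le)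
    (div_add_div_self_add_eq_one ht.ne')
  simp only [perspective, Prod.mk_add_mk, h₁, h₂, ht, if_true, inv_add_smul_add h₁ h₂]
  calc t₁ * J (t₁⁻¹ • x₁) + t₂ * J (t₂⁻¹ • x₂)
      = (t₁ + t₂) * ((t₁ / (t₁ + t₂)) • J (t₁⁻¹ • x₁) + (t₂ / (t₁ + t₂)) • J (t₂⁻¹ • x₂)) := by
        simp only [smul_eq_mul]; field_simp
    _ ≤ _ := mul_le_mul_of_nonneg_left hJmix ht.le

theorem concaveOn_perspective (hJ : ConcaveOn 𝕜 s J) :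
    ConcaveOn 𝕜 (perspectiveCone s) (perspective J) := by
  refine ⟨fun p hp q hq a b ha hb _ => add_mem_perspectiveCone hJ.1
    (smul_mem_perspectiveCone ha hp) (smul_mem_perspectiveCone hb hq), ?_⟩
  intro p hp q hq a b ha hb _
  rw [smul_eq_mul, smul_eq_mul, ← perspective_smul J ha, ← perspective_smul J hb]
  exact perspective_add_perspective_le hJ (smul_mem_perspectiveCone ha hp)
    (smul_mem_perspectiveCone hb hq)

lemma mk_sum_mem_perspectiveCone_stdSimplex {ι : Type*} [Fintype ι] {v : ι → 𝕜} (hv : 0 ≤ v) :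
    (∑ i, v i, v) ∈ perspectiveCone (stdSimplex 𝕜 ι) := by
  rcases (sum_nonneg fun i _ => hv i).eq_or_lt with h | h
  · have hv0 : v = 0 := funext fun i =>
      (sum_eq_zero_iff_of_nonneg fun i _ => hv i).1 h.symm i (mem_univ i)
    exact .inl (by simp [hv0])
  · refine .inr ⟨h, fun i => smul_nonneg (inv_nonneg.2 h.le) (hv i), ?_⟩
    simp [← mul_sum, inv_mul_cancel₀ h.ne']

end Perspective

section Filter

variable {N : ℕ} {U Y : Type*} [Fintype Y] (A : U → Fin N → Fin N → ℝ) (B : Y → Fin N → U → ℝ)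
  (u : U) (y : Y)

noncomputable def sigNormTvecLinearMap : (Fin N → ℝ) →ₗ[ℝ] ℝ × (Fin N → ℝ) where
  toFun π := (sigNorm A B π u y, Tvec A B π u y)
  map_add' π ρ := by
    ext <;> simp [sigNorm, Tvec, mul_add, sum_add_distrib]
  map_smul' c π := by
    ext <;> simp [sigNorm, Tvec, mul_sum, mul_left_comm]

lemma backup_eq_sum_perspective (J : (Fin N → ℝ) → ℝ) (π : Fin N → ℝ) :
    backup A B J π u = ∑ y, perspective J (sigNormTvecLinearMap A B u y π) := by
  refine sum_congr rfl fun y _ => ?_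
  have hbel : belUpd A B π u y = (sigNorm A B π u y)⁻¹ • Tvec A B π u y :=
    funext fun i => div_eq_inv_mul _ _
  simp only [perspective, sigNormTvecLinearMap, LinearMap.coe_mk, AddHom.coe_mk, hbel]
  congr

lemma tvec_nonneg (hA : ∀ i j, 0 ≤ A u i j) (hB : ∀ i, 0 ≤ B y i u) {π : Fin N → ℝ}
    (hπ : 0 ≤ π) : 0 ≤ Tvec A B π u y :=
  fun i => mul_nonneg (hB i) (sum_nonneg fun j _ => mul_nonneg (hA i j) (hπ j))

end Filter

theorem bellman_backup_concave_general
    (N : ℕ) (U Y : Type) [Fintype Y]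
    (A : U → Fin N → Fin N → ℝ) (B : Y → Fin N → U → ℝ)
    (hA : ∀ u i j, 0 ≤ A u i j)
    (hB : ∀ y i u, 0 ≤ B y i u)
    (J : (Fin N → ℝ) → ℝ) (hJ : ConcaveOn ℝ (stdSimplex' N) J) (u : U) :
    ConcaveOn ℝ (stdSimplex' N) (fun π => backup A B J π u) := by
  have hterm (y : Y) :
      ConcaveOn ℝ (stdSimplex' N) fun π => perspective J (sigNormTvecLinearMap A B u y π) :=
    ((concaveOn_perspective hJ).comp_linearMap _).subset
      (fun π hπ => mk_sum_mem_perspectiveCone_stdSimplex (tvec_nonneg A B u y (hA u)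
        (fun i => hB y i u) hπ.1)) hJ.1
  simpa only [backup_eq_sum_perspective] using ConcaveOn.finset_sum hJ.1 fun y _ => hterm y

/-- **Concavity preservation of the belief-MDP Bellman backup** (key step for Theorem 2).
If `J : Δ^N → ℝ` is concave, then for every control `u` the function
`π ↦ Σ_{y : σ(π,u,y) > 0} σ(π,u,y) · J(Π(π,u,y))` is concave on `Δ^N`. -/
theorem bellman_backup_concave
    (N : ℕ) (U Y : Type) [Fintype U] [Fintype Y]
    (A : U → Fin N → Fin N → ℝ) (B : Y → Fin N → U → ℝ)
    (hA : ∀ u i j, 0 ≤ A u i j) (hAcol : ∀ u j, ∑ i, A u i j = 1)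
    (hB : ∀ y i u, 0 ≤ B y i u) (hBsum : ∀ i u, ∑ y, B y i u = 1)
    (J : (Fin N → ℝ) → ℝ) (hJ : ConcaveOn ℝ (stdSimplex' N) J) (u : U) :
    ConcaveOn ℝ (stdSimplex' N) (fun π => backup A B J π u) :=
  bellman_backup_concave_general N U Y A B hA hB J hJ u
end

section
/- (Finite piecewise-linear representation of the value function, equation (12).) In the filter setup, fix a horizon T ≥ 1 and suppose the costs are pointwise minima of finitely many linear functions: there are finite nonempty sets Γ_T ⊂ ℝ^N and Γ_k^u ⊂ ℝ^N (for 0 ≤ k ≤ T−1, u ∈ 𝒰) with g_T(π) = min_{α ∈ Γ_T} ⟨π, α⟩ and g_k(π,u) = min_{α ∈ Γ_k^u} ⟨π, α⟩ for all π ∈ Δ^N. Define J_T(π) = g_T(π) and J_k(π) = min_{u ∈ 𝒰} [ g_k(π,u) + Σ_{y ∈ 𝒴, σ(π,u,y) > 0} σ(π,u,y) · J_{k+1}( Π(π,u,y) ) ] for 0 ≤ k ≤ T−1. Then for every 0 ≤ k ≤ T there exists a finite nonempty set Γ_k ⊂ ℝ^N such that J_k(π) = min_{α ∈ Γ_k}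 ⟨π, α⟩ for all π ∈ Δ^N (⟨·,·⟩ the Euclidean inner product). -/
/-!
Call a function on a set of vectors *min-of-linear* if it agrees there with `x ↦ min_{α ∈ Γ} ⟨x, α⟩`
for a finite nonempty `Γ`. This class is closed under sums, finite minima and precomposition with
linear maps. The Bellman summand `σ(π,u,y) · J(Π(π,u,y))` is the perspective of `J` evaluated at
the unnormalised update `𝐓(π,u,y) = M_{u,y} π`, and the perspective of a min-of-linear function on
the simplex is min-of-linear on the nonnegative orthant, with the same `Γ`: scale by `σ > 0`, and
if `σ = 0` then `𝐓 = 0` by nonnegativity. Backward induction from `J_T = g_T` concludes.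
-/

open Finset

open Matrix

open scoped Pointwise

section MinOfLinear

variable {𝕜 ι : Type*} [Field 𝕜] [LinearOrder 𝕜] [Fintype ι]

def IsMinOfLinearOn (S : Set (ι → 𝕜)) (f : (ι → 𝕜) → 𝕜) : Prop :=
  ∃ (Γ : Finset (ι → 𝕜)) (hΓ : Γ.Nonempty), ∀ x ∈ S, f x = Γ.inf' hΓ (x ⬝ᵥ ·)

variable {S : Set (ι → 𝕜)} {f f' : (ι → 𝕜) → 𝕜}

theorem IsMinOfLinearOn.congr (hf : IsMinOfLinearOn S f) (h : ∀ x ∈ S, f x = f' x) :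
    IsMinOfLinearOn S f' := by
  obtain ⟨Γ, hΓ, hf⟩ := hf
  exact ⟨Γ, hΓ, fun x hx => (h x hx).symm.trans (hf x hx)⟩

theorem isMinOfLinearOn_zero : IsMinOfLinearOn S (0 : (ι → 𝕜) → 𝕜) :=
  ⟨{0}, singleton_nonempty 0, fun x _ => by simp⟩

theorem IsMinOfLinearOn.inf (hf : IsMinOfLinearOn S f) (hf' : IsMinOfLinearOn S f') :
    IsMinOfLinearOn S (f ⊓ f') := by
  classical
  obtain ⟨Γ, hΓ, hf⟩ := hf
  obtain ⟨Γ', hΓ', hf'⟩ := hf'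
  exact ⟨Γ ∪ Γ', hΓ.mono subset_union_left, fun x hx => by
    rw [inf'_union hΓ hΓ', Pi.inf_apply, hf x hx, hf' x hx]⟩

theorem IsMinOfLinearOn.finset_inf' {κ : Type*} {s : Finset κ} (hs : s.Nonempty)
    {F : κ → (ι → 𝕜) → 𝕜} (hF : ∀ u ∈ s, IsMinOfLinearOn S (F u)) :
    IsMinOfLinearOn S fun x => s.inf' hs (F · x) := by
  simp_rw [← Finset.inf'_apply]
  exact inf'_induction hs F (fun _ h _ h' => h.inf h') hF

theorem IsMinOfLinearOn.comp_mulVec {ι' : Type*} [Fintype ι'] {S' : Set (ι' → 𝕜)}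
    (hf : IsMinOfLinearOn S f) (M : Matrix ι ι' 𝕜) (hM : ∀ x ∈ S', M *ᵥ x ∈ S) :
    IsMinOfLinearOn S' fun x => f (M *ᵥ x) := by
  classical
  obtain ⟨Γ, hΓ, hf⟩ := hf
  refine ⟨Γ.image (· ᵥ* M), hΓ.image _, fun x hx => (hf _ (hM x hx)).trans ?_⟩
  rw [inf'_image]
  refine inf'_congr hΓ rfl fun α _ => ?_
  simp [dotProduct_comm, dotProduct_mulVec]

variable [IsStrictOrderedRing 𝕜]

theorem IsMinOfLinearOn.add (hf : IsMinOfLinearOn S f) (hf' : IsMinOfLinearOn S f') :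
    IsMinOfLinearOn S (f + f') := by
  classical
  obtain ⟨Γ, hΓ, hf⟩ := hf
  obtain ⟨Γ', hΓ', hf'⟩ := hf'
  refine ⟨Γ + Γ', hΓ.add hΓ', fun x hx => ?_⟩
  rw [Pi.add_apply, hf x hx, hf' x hx]
  refine le_antisymm (le_inf' _ _ ?_) ?_
  · intro _ h
    obtain ⟨a, ha, b, hb, rfl⟩ := mem_add.1 h
    rw [dotProduct_add]
    exact add_le_add (inf'_le _ ha) (inf'_le _ hb)
  · obtain ⟨a, ha, hxa⟩ := exists_mem_eq_inf' hΓ (x ⬝ᵥ ·)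
    obtain ⟨b, hb, hxb⟩ := exists_mem_eq_inf' hΓ' (x ⬝ᵥ ·)
    rw [hxa, hxb, ← dotProduct_add]
    exact inf'_le _ (add_mem_add ha hb)

theorem IsMinOfLinearOn.sum {κ : Type*} (s : Finset κ) {F : κ → (ι → 𝕜) → 𝕜}
    (hF : ∀ y ∈ s, IsMinOfLinearOn S (F y)) : IsMinOfLinearOn S fun x => ∑ y ∈ s, F y x := by
  rw [← sum_fn]
  exact sum_induction F _ (fun _ _ => .add) isMinOfLinearOn_zero hF

def simplexPerspective (f : (ι → 𝕜) → 𝕜) (v : ι → 𝕜) : 𝕜 :=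
  if 0 < ∑ i, v i then (∑ i, v i) * f (fun i => v i / ∑ j, v j) else 0

theorem IsMinOfLinearOn.simplexPerspective (hf : IsMinOfLinearOn (stdSimplex 𝕜 ι) f) :
    IsMinOfLinearOn {v | 0 ≤ v} (simplexPerspective f) := by
  obtain ⟨Γ, hΓ, hf⟩ := hf
  refine ⟨Γ, hΓ, fun v (hv : 0 ≤ v) => ?_⟩
  unfold _root_.simplexPerspective
  split_ifs with hpos
  · have hnormalize : (fun i => v i / ∑ j, v j) = (∑ j, v j)⁻¹ • v := by
      ext i
      simp [div_eq_inv_mul]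
    have hmem : (∑ j, v j)⁻¹ • v ∈ stdSimplex 𝕜 ι :=
      ⟨fun i => mul_nonneg (inv_nonneg.2 hpos.le) (hv i), by
        simp [← mul_sum, inv_mul_cancel₀ hpos.ne']⟩
    rw [hnormalize, hf _ hmem]
    calc (∑ j, v j) * Γ.inf' hΓ ((∑ j, v j)⁻¹ • v ⬝ᵥ ·)
        = Γ.inf' hΓ fun α => (∑ j, v j) * ((∑ j, v j)⁻¹ • v ⬝ᵥ α) :=
          map_finset_inf' (OrderIso.mulLeft₀ _ hpos) hΓ _
      _ = Γ.inf' hΓ (v ⬝ᵥ ·) := by simp [smul_dotProduct, mul_inv_cancel_left₀ hpos.ne']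
  · have hv0 : v = 0 := by
      ext i
      refine (sum_eq_zero_iff_of_nonneg fun i _ => hv i).1 ?_ i (mem_univ i)
      exact le_antisymm (not_lt.1 hpos) (sum_nonneg fun i _ => hv i)
    simp [hv0]

end MinOfLinear

section Filter

variable {N : ℕ} {U Y : Type*} [Fintype Y]

theorem Tvec_eq_mulVec (A : U → Fin N → Fin N → ℝ) (B : Y → Fin N → U → ℝ)
    (π : Fin N → ℝ) (u : U) (y : Y) :
    Tvec A B π u y = of (fun i j => B y i u * A u i j) *ᵥ π := by
  ext i
  simp [Tvec, mulVec, dotProduct, mul_sum, mul_assoc]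

theorem backup_eq_sum_simplexPerspective (A : U → Fin N → Fin N → ℝ)
    (B : Y → Fin N → U → ℝ) (J : (Fin N → ℝ) → ℝ) (π : Fin N → ℝ) (u : U) :
    backup A B J π u = ∑ y, simplexPerspective J (Tvec A B π u y) := by
  unfold backup simplexPerspective belUpd sigNorm
  congr

theorem IsMinOfLinearOn.backup {A : U → Fin N → Fin N → ℝ} {B : Y → Fin N → U → ℝ}
    (hA : ∀ u i j, 0 ≤ A u i j) (hB : ∀ y i u, 0 ≤ B y i u) {J : (Fin N → ℝ) → ℝ}
    (hJ : IsMinOfLinearOn (stdSimplex ℝ (Fin N)) J) (u : U) :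
    IsMinOfLinearOn (stdSimplex ℝ (Fin N)) fun π => backup A B J π u := by
  simp_rw [backup_eq_sum_simplexPerspective, Tvec_eq_mulVec]
  refine .sum univ fun y _ => hJ.simplexPerspective.comp_mulVec _ fun π hπ i => ?_
  simp only [Pi.zero_apply, mulVec, dotProduct, of_apply]
  exact sum_nonneg fun j _ => mul_nonneg (mul_nonneg (hB y i u) (hA u i j)) (hπ.1 j)

end Filter

theorem value_function_piecewise_linear_general
    (N : ℕ) (U Y : Type) [Fintype U] [Fintype Y]
    (A : U → Fin N → Fin N → ℝ) (B : Y → Fin N → U → ℝ)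
    (hA : ∀ u i j, 0 ≤ A u i j)
    (hB : ∀ y i u, 0 ≤ B y i u)
    [Nonempty U]
    (T : ℕ)
    (g : ℕ → (Fin N → ℝ) → U → ℝ) (gT : (Fin N → ℝ) → ℝ)
    (ΓT : Finset (Fin N → ℝ)) (hΓT : ΓT.Nonempty)
    (Γ : ℕ → U → Finset (Fin N → ℝ)) (hΓ : ∀ k, k < T → ∀ u, (Γ k u).Nonempty)
    (hgT : ∀ π ∈ stdSimplex' N, gT π = ΓT.inf' hΓT (fun α => ∑ i, π i * α i))
    (hg : ∀ k, ∀ hk : k < T, ∀ u : U, ∀ π ∈ stdSimplex' N,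
      g k π u = (Γ k u).inf' (hΓ k hk u) (fun α => ∑ i, π i * α i))
    (J : ℕ → (Fin N → ℝ) → ℝ)
    (hJT : ∀ π ∈ stdSimplex' N, J T π = gT π)
    (hJk : ∀ k < T, ∀ π ∈ stdSimplex' N,
      J k π = Finset.univ.inf' Finset.univ_nonempty
        (fun u : U => g k π u + backup A B (J (k + 1)) π u)) :
    ∀ k ≤ T, ∃ Γk : Finset (Fin N → ℝ), ∃ h : Γk.Nonempty,
      ∀ π ∈ stdSimplex' N, J k π = Γk.inf' h (fun α => ∑ i, π i * α i) := by
  intro k hk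
  induction hk using Nat.decreasingInduction with
  | self => exact ⟨ΓT, hΓT, fun π hπ => (hJT π hπ).trans (hgT π hπ)⟩
  | of_succ k hk ih =>
    have hcost (u : U) : IsMinOfLinearOn (stdSimplex ℝ (Fin N)) (g k · u) :=
      ⟨Γ k u, hΓ k hk u, hg k hk u⟩
    have hbellman : IsMinOfLinearOn (stdSimplex ℝ (Fin N)) fun π =>
        univ.inf' univ_nonempty fun u => g k π u + backup A B (J (k + 1)) π u :=
      .finset_inf' univ_nonempty fun u _ => (hcost u).add (.backup hA hB ih u)
    exact hbellman.congr fun π hπ => (hJk k hk π hπ).symm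

/-- **Finite piecewise-linear representation of the value function, equation (12).**
If the costs are pointwise minima of finitely many linear functions of the belief, then so is
every value function `J_k` of the backward recursion. -/
theorem value_function_piecewise_linear
    (N : ℕ) (U Y : Type) [Fintype U] [Fintype Y]
    (A : U → Fin N → Fin N → ℝ) (B : Y → Fin N → U → ℝ)
    (hA : ∀ u i j, 0 ≤ A u i j) (hAcol : ∀ u j, ∑ i, A u i j = 1)
    (hB : ∀ y i u, 0 ≤ B y i u) (hBsum : ∀ i u, ∑ y, B y i u = 1)
    [Nonempty U]
    (T : ℕ) (hT : 1 ≤ T)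
    (g : ℕ → (Fin N → ℝ) → U → ℝ) (gT : (Fin N → ℝ) → ℝ)
    (ΓT : Finset (Fin N → ℝ)) (hΓT : ΓT.Nonempty)
    (Γ : ℕ → U → Finset (Fin N → ℝ)) (hΓ : ∀ k, k < T → ∀ u, (Γ k u).Nonempty)
    (hgT : ∀ π ∈ stdSimplex' N, gT π = ΓT.inf' hΓT (fun α => ∑ i, π i * α i))
    (hg : ∀ k, ∀ hk : k < T, ∀ u : U, ∀ π ∈ stdSimplex' N,
      g k π u = (Γ k u).inf' (hΓ k hk u) (fun α => ∑ i, π i * α i))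
    (J : ℕ → (Fin N → ℝ) → ℝ)
    (hJT : ∀ π ∈ stdSimplex' N, J T π = gT π)
    (hJk : ∀ k < T, ∀ π ∈ stdSimplex' N,
      J k π = Finset.univ.inf' Finset.univ_nonempty
        (fun u : U => g k π u + backup A B (J (k + 1)) π u)) :
    ∀ k ≤ T, ∃ Γk : Finset (Fin N → ℝ), ∃ h : Γk.Nonempty,
      ∀ π ∈ stdSimplex' N, J k π = Γk.inf' h (fun α => ∑ i, π i * α i) :=
  value_function_piecewise_linear_general N U Y A B hA hB T g gT ΓT hΓT Γ hΓ hgT hg J hJT hJk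
end
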